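/- Let f : [0,1] → 2^[0,1] be upper semicontinuous with connected graph G(f) and having the Weak Intermediate Value Property, and let (x₀, y₀) ∈ G(f). Then there exists an upper semicontinuous set-valued function g : [0,1] → C([0,1]) (i.e., g(x) is a nonempty compact connected subset of [0,1] for every x) such that (x₀, y₀) ∈ G(g) and G(g) ⊆ G(f). -/

import Mathlib

/-!
For each mesh `δ > 0`, the Weak Intermediate Value Property lets one walk from `(x₀, y₀)` to the
right and to the left along the grid `x₀ ± k δ` (clamped to `[0,1]`), choosing values
`c k ∈ f (s k)` such that every height between `c k` and `c (k + 1)` is a value of `f` over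
`[s k, s (k + 1)]`. The union of the rectangles `[s k, s (k + 1)] × [c k, c (k + 1)]` is a
staircase within `δ` of the graph of `f` that meets every vertical line over `[0,1]`, and between
any two of its points every intermediate height is attained at an intermediate abscissa.

The graph of `g` is the Kuratowski lower limit of these staircases (`δ = 1/(n+1)`) along an
ultrafilter refining `atTop`. It is closed and lies in the closed graph of `f`; compactness along
the ultrafilter makes its vertical sections nonempty, and the intermediate value property of the
staircases survives in the limit as the convexity of these sections.
-/

open Set

/-- SVGraph of a set-valued function on [0,1]. -/
def SVGraph (f : ℝ → Set ℝ) : Set (ℝ × ℝ) :=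
  {p | p.1 ∈ Icc (0:ℝ) 1 ∧ p.2 ∈ f p.1}

/-- f has nonempty compact values contained in [0,1]. -/
def SV (f : ℝ → Set ℝ) : Prop :=
  ∀ x ∈ Icc (0:ℝ) 1, (f x).Nonempty ∧ IsCompact (f x) ∧ f x ⊆ Icc (0:ℝ) 1

/-- Upper semicontinuity on [0,1]. -/
def USC (f : ℝ → Set ℝ) : Prop :=
  ∀ x ∈ Icc (0:ℝ) 1, ∀ U : Set ℝ, IsOpen U → f x ⊆ U →
    ∃ V : Set ℝ, IsOpen V ∧ x ∈ V ∧ ∀ v ∈ V ∩ Icc (0:ℝ) 1, f v ⊆ U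

/-- Weak Intermediate Value Property. -/
def WIVP (f : ℝ → Set ℝ) : Prop :=
  ∀ x₁ ∈ Icc (0:ℝ) 1, ∀ x₂ ∈ Icc (0:ℝ) 1, x₁ ≠ x₂ → ∀ y₁ ∈ f x₁,
    ∃ y₂ ∈ f x₂, ∀ y ∈ uIcc y₁ y₂, ∃ x ∈ uIcc x₁ x₂, y ∈ f x

/-- Intermediate Value Property. -/
def IVP (f : ℝ → Set ℝ) : Prop :=
  ∀ x₁ ∈ Icc (0:ℝ) 1, ∀ x₂ ∈ Icc (0:ℝ) 1, x₁ ≠ x₂ → ∀ y₁ ∈ f x₁, ∀ y₂ ∈ f x₂, y₁ ≠ y₂ →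
    ∀ y ∈ Ioo (min y₁ y₂) (max y₁ y₂), ∃ x ∈ Ioo (min x₁ x₂) (max x₁ x₂), y ∈ f x

open Metric Filter Topology

theorem isClosed_SVGraph {f : ℝ → Set ℝ} (hSV : SV f) (husc : USC f) : IsClosed (SVGraph f) := by
  rw [← isOpen_compl_iff, isOpen_iff_mem_nhds]
  rintro ⟨x, y⟩ hxy
  by_cases hx : x ∈ Icc (0 : ℝ) 1
  · obtain ⟨U, W, hU, hW, hfU, hyW, hUW⟩ :=
      (hSV x hx).2.1.separation_of_notMem fun hy => hxy ⟨hx, hy⟩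
    obtain ⟨V, hV, hxV, hVU⟩ := husc x hx U hU hfU
    filter_upwards [prod_mem_nhds (hV.mem_nhds hxV) (hW.mem_nhds hyW)]
      with ⟨v, z⟩ ⟨hv, hz⟩ ⟨hv01, hzf⟩
    exact hUW.notMem_of_mem_left (hVU v ⟨hv, hv01⟩ hzf) hz
  · filter_upwards [prod_mem_nhds (isClosed_Icc.isOpen_compl.mem_nhds hx) univ_mem]
      with p hp hpG using hp.1 hpG.1

theorem usc_preimage_mk {Γ K : Set (ℝ × ℝ)} (hΓ : IsClosed Γ) (hK : IsCompact K) (hΓK : Γ ⊆ K) :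
    USC fun x => Prod.mk x ⁻¹' Γ := by
  intro x _ U hU hxU
  set B := Prod.fst '' (Γ ∩ Prod.snd ⁻¹' Uᶜ)
  have hB : IsClosed B :=
    ((hK.of_isClosed_subset (hΓ.inter (hU.isClosed_compl.preimage continuous_snd))
      (inter_subset_left.trans hΓK)).image continuous_fst).isClosed
  refine ⟨Bᶜ, hB.isOpen_compl, ?_, ?_⟩
  · rintro ⟨⟨x', y⟩, ⟨hxy, hyU⟩, rfl⟩
    exact hyU (hxU hxy)
  · rintro v ⟨hv, -⟩ y hy
    by_contra hyU
    exact hv ⟨(v, y), ⟨hy, hyU⟩, rfl⟩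

section LowerLimit

variable {ι X : Type*} [TopologicalSpace X]

def lowerLimit (l : Filter ι) (A : ι → Set X) : Set X :=
  {p | ∀ U ∈ 𝓝 p, ∀ᶠ i in l, (A i ∩ U).Nonempty}

variable {l : Filter ι} {A : ι → Set X}

theorem isClosed_lowerLimit : IsClosed (lowerLimit l A) := by
  refine isClosed_iff_nhds.2 fun p hp U hU => ?_
  obtain ⟨V, hVU, hV, hpV⟩ := mem_nhds_iff.1 hU
  obtain ⟨q, hqV, hq⟩ := hp V (hV.mem_nhds hpV)
  exact (hq V (hV.mem_nhds hqV)).mono fun i => Nonempty.mono (inter_subset_inter_right _ hVU)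

theorem mem_lowerLimit_of_forall_mem {p : X} (h : ∀ i, p ∈ A i) : p ∈ lowerLimit l A :=
  fun _ hU => Eventually.of_forall fun i => ⟨p, h i, mem_of_mem_nhds hU⟩

theorem lowerLimit_inter_nonempty (𝒰 : Ultrafilter ι) {K : Set X} (hK : IsCompact K)
    (h : ∀ i, (A i ∩ K).Nonempty) : (lowerLimit (𝒰 : Filter ι) A ∩ K).Nonempty := by
  choose x hxA hxK using h
  obtain ⟨p, hpK, hp⟩ := hK.ultrafilter_le_nhds (𝒰.map x)
    (le_principal_iff.2 (show x ⁻¹' K ∈ (𝒰 : Filter ι) from univ_mem' hxK))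
  exact ⟨p, fun U hU => mem_of_superset (hp hU) fun i hi => ⟨x i, hxA i, hi⟩, hpK⟩

end LowerLimit

theorem lowerLimit_subset_closure {ι X : Type*} [PseudoMetricSpace X] {l : Filter ι} [l.NeBot]
    {A : ι → Set X} {C : Set X} (h : ∀ ε > 0, ∀ᶠ i in l, A i ⊆ cthickening ε C) :
    lowerLimit l A ⊆ closure C := by
  intro p hp
  simp only [closure_eq_iInter_cthickening, mem_iInter]
  intro ε hε
  obtain ⟨i, ⟨q, hqA, hq⟩, hAC⟩ :=
    ((hp _ (ball_mem_nhds p (half_pos hε))).and (h _ (half_pos hε))).exists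
  rw [← add_halves ε]
  exact cthickening_cthickening_subset (half_pos hε).le (half_pos hε).le C
    (mem_cthickening_of_dist_le p q _ _ (hAC hqA) (mem_ball'.1 hq).le)

section IntermediateValues

def HasIntermediateValues (A : Set (ℝ × ℝ)) : Prop :=
  ∀ p ∈ A, ∀ q ∈ A, ∀ z ∈ uIcc p.2 q.2, ∃ w ∈ uIcc p.1 q.1, (w, z) ∈ A

theorem hasIntermediateValues_uIcc_prod_uIcc (a b c d : ℝ) :
    HasIntermediateValues (uIcc a b ×ˢ uIcc c d) :=
  fun p hp _ hq _ hz => ⟨p.1, left_mem_uIcc, hp.1, ordConnected_uIcc.uIcc_subset hp.2 hq.2 hz⟩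

theorem HasIntermediateValues.union {A B : Set (ℝ × ℝ)} (hA : HasIntermediateValues A)
    (hB : HasIntermediateValues B) {p₀ : ℝ × ℝ} (hp₀A : p₀ ∈ A) (hp₀B : p₀ ∈ B)
    (hsep : ∀ p ∈ A, ∀ q ∈ B, p₀.1 ∈ uIcc p.1 q.1) : HasIntermediateValues (A ∪ B) := by
  have across : ∀ p ∈ A, ∀ q ∈ B, ∀ z ∈ uIcc p.2 q.2, ∃ w ∈ uIcc p.1 q.1, (w, z) ∈ A ∪ B := by
    intro p hp q hq z hz
    rcases uIcc_subset_uIcc_union_uIcc hz with hz | hz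
    · obtain ⟨w, hw, hwA⟩ := hA p hp p₀ hp₀A z hz
      exact ⟨w, uIcc_subset_uIcc left_mem_uIcc (hsep p hp q hq) hw, Or.inl hwA⟩
    · obtain ⟨w, hw, hwB⟩ := hB p₀ hp₀B q hq z hz
      exact ⟨w, uIcc_subset_uIcc (hsep p hp q hq) right_mem_uIcc hw, Or.inr hwB⟩
  rintro p (hp | hp) q (hq | hq) z hz
  · obtain ⟨w, hw, hwA⟩ := hA p hp q hq z hz
    exact ⟨w, hw, Or.inl hwA⟩
  · exact across p hp q hq z hz
  · rw [uIcc_comm] at hz ⊢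
    exact across q hq p hp z hz
  · obtain ⟨w, hw, hwB⟩ := hB p hp q hq z hz
    exact ⟨w, hw, Or.inr hwB⟩

theorem Monotone.hasIntermediateValues_iUnion {A : ℕ → Set (ℝ × ℝ)} (hmono : Monotone A)
    (hA : ∀ n, HasIntermediateValues (A n)) : HasIntermediateValues (⋃ n, A n) := by
  intro p hp q hq z hz
  obtain ⟨m, hpm⟩ := mem_iUnion.1 hp
  obtain ⟨m', hqm'⟩ := mem_iUnion.1 hq
  obtain ⟨w, hw, hwA⟩ := hA (max m m') p (hmono (le_max_left _ _) hpm) q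
    (hmono (le_max_right _ _) hqm') z hz
  exact ⟨w, hw, mem_iUnion.2 ⟨_, hwA⟩⟩

theorem ordConnected_preimage_mk_lowerLimit {ι : Type*} {l : Filter ι} {A : ι → Set (ℝ × ℝ)}
    (hA : ∀ i, HasIntermediateValues (A i)) (x : ℝ) :
    (Prod.mk x ⁻¹' lowerLimit l A).OrdConnected := by
  refine ⟨fun y hy y' hy' z hz => ?_⟩
  rcases hz.1.eq_or_lt with rfl | hyz
  · exact hy
  rcases hz.2.eq_or_lt with rfl | hzy'
  · exact hy'
  intro U hU
  obtain ⟨ε, hε, hεU⟩ := Metric.mem_nhds_iff.1 hU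
  set η := min ε (min (z - y) (y' - z))
  have hη : 0 < η := lt_min hε (lt_min (by linarith) (by linarith))
  have hηz : η ≤ z - y ∧ η ≤ y' - z := ⟨(min_le_right _ _).trans (min_le_left _ _),
    (min_le_right _ _).trans (min_le_right _ _)⟩
  filter_upwards [hy _ (ball_mem_nhds _ hη), hy' _ (ball_mem_nhds _ hη)]
    with i ⟨q, hqA, hq⟩ ⟨q', hq'A, hq'⟩
  simp only [← ball_prod_same, mem_prod, Real.ball_eq_Ioo, mem_Ioo] at hq hq'
  obtain ⟨w, hw, hwA⟩ := hA i q hqA q' hq'A z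
    (Icc_subset_uIcc ⟨by linarith [hq.2.2], by linarith [hq'.2.1]⟩)
  have hw : w ∈ ball x η := by
    rw [Real.ball_eq_Ioo]
    exact ordConnected_Ioo.uIcc_subset hq.1 hq'.1 hw
  refine ⟨(w, z), hwA, hεU ?_⟩
  rw [← ball_prod_same]
  exact ⟨ball_subset_ball (min_le_left _ _) hw, mem_ball_self hε⟩

end IntermediateValues

theorem exists_mem_uIcc_succ {α : Type*} [LinearOrder α] (s : ℕ → α) {x : α} :
    ∀ {N : ℕ}, x ∈ uIcc (s 0) (s N) → ∃ k, x ∈ uIcc (s k) (s (k + 1))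
  | 0, hx => ⟨0, uIcc_subset_uIcc left_mem_uIcc left_mem_uIcc hx⟩
  | N + 1, hx => (uIcc_subset_uIcc_union_uIcc hx).elim (exists_mem_uIcc_succ s) fun h => ⟨N, h⟩

section Staircase

def staircase (s c : ℕ → ℝ) : Set (ℝ × ℝ) :=
  ⋃ k, uIcc (s k) (s (k + 1)) ×ˢ uIcc (c k) (c (k + 1))

variable {s c : ℕ → ℝ}

theorem mk_mem_staircase (k : ℕ) : (s k, c k) ∈ staircase s c :=
  mem_iUnion.2 ⟨k, left_mem_uIcc, left_mem_uIcc⟩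

theorem Monotone.le_fst_of_mem_staircase (hs : Monotone s) {p : ℝ × ℝ}
    (hp : p ∈ staircase s c) : s 0 ≤ p.1 := by
  obtain ⟨k, hk, -⟩ := mem_iUnion.1 hp
  rw [uIcc_of_le (hs k.le_succ)] at hk
  exact (hs k.zero_le).trans hk.1

theorem Antitone.fst_le_of_mem_staircase (hs : Antitone s) {p : ℝ × ℝ}
    (hp : p ∈ staircase s c) : p.1 ≤ s 0 := by
  obtain ⟨k, hk, -⟩ := mem_iUnion.1 hp
  rw [uIcc_of_ge (hs k.le_succ)] at hk
  exact hk.2.trans (hs k.zero_le)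

theorem hasIntermediateValues_staircase (hs : Monotone s ∨ Antitone s) :
    HasIntermediateValues (staircase s c) := by
  -- Add the boxes one at a time: each is glued to the previous ones at its left corner, whose
  -- abscissa separates them by monotonicity.
  set box : ℕ → Set (ℝ × ℝ) := fun k => uIcc (s k) (s (k + 1)) ×ˢ uIcc (c k) (c (k + 1))
  have hsep : ∀ m, ∀ p ∈ accumulate box m, ∀ q ∈ box (m + 1), s (m + 1) ∈ uIcc p.1 q.1 := by
    intro m p hp q hq
    obtain ⟨k, hkm, hp, -⟩ := mem_accumulate.1 hp
    obtain ⟨hq, -⟩ := hq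
    rcases hs with hs | hs
    · rw [uIcc_of_le (hs k.le_succ)] at hp
      rw [uIcc_of_le (hs (m + 1).le_succ)] at hq
      exact Icc_subset_uIcc ⟨hp.2.trans (hs (by omega)), hq.1⟩
    · rw [uIcc_of_ge (hs k.le_succ)] at hp
      rw [uIcc_of_ge (hs (m + 1).le_succ)] at hq
      exact Icc_subset_uIcc' ⟨hq.2, (hs (by omega)).trans hp.1⟩
  have hacc : ∀ m, HasIntermediateValues (accumulate box m) := by
    intro m
    induction m with
    | zero =>
      rw [accumulate_zero_nat]
      exact hasIntermediateValues_uIcc_prod_uIcc _ _ _ _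
    | succ m ih =>
      rw [accumulate_succ]
      exact ih.union (p₀ := (s (m + 1), c (m + 1))) (hasIntermediateValues_uIcc_prod_uIcc _ _ _ _)
        (subset_accumulate (s := box) ⟨right_mem_uIcc, right_mem_uIcc⟩)
        ⟨left_mem_uIcc, left_mem_uIcc⟩ (hsep m)
  rw [staircase, ← iUnion_accumulate]
  exact monotone_accumulate.hasIntermediateValues_iUnion hacc

theorem staircase_inter_nonempty {K : Set ℝ} (hc : ∀ k, c k ∈ K) {x : ℝ} {N : ℕ}
    (hx : x ∈ uIcc (s 0) (s N)) : (staircase s c ∩ {x} ×ˢ K).Nonempty :=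
  let ⟨k, hk⟩ := exists_mem_uIcc_succ s hx
  ⟨(x, c k), mem_iUnion.2 ⟨k, hk, left_mem_uIcc⟩, rfl, hc k⟩

theorem staircase_subset_cthickening {f : ℝ → Set ℝ} {δ : ℝ} (hs : ∀ k, s k ∈ Icc (0 : ℝ) 1)
    (hstep : ∀ k, |s (k + 1) - s k| ≤ δ)
    (hc : ∀ k, ∀ y ∈ uIcc (c k) (c (k + 1)), ∃ x ∈ uIcc (s k) (s (k + 1)), y ∈ f x) :
    staircase s c ⊆ cthickening δ (SVGraph f) := by
  simp only [staircase, iUnion_subset_iff]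
  rintro k ⟨u, y⟩ ⟨hu, hy⟩
  obtain ⟨x, hx, hyx⟩ := hc k y hy
  refine mem_cthickening_of_dist_le _ (x, y) δ _
    ⟨ordConnected_Icc.uIcc_subset (hs k) (hs (k + 1)) hx, hyx⟩ ?_
  rw [Prod.dist_eq, dist_self, Real.dist_eq, max_eq_left (abs_nonneg _)]
  exact (abs_sub_le_of_uIcc_subset_uIcc (uIcc_subset_uIcc hx hu)).trans (hstep k)

end Staircase

theorem WIVP.exists_chain {f : ℝ → Set ℝ} (hf : WIVP f) {s : ℕ → ℝ}
    (hs : ∀ k, s k ∈ Icc (0 : ℝ) 1) {y₀ : ℝ} (hy₀ : y₀ ∈ f (s 0)) :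
    ∃ c : ℕ → ℝ, c 0 = y₀ ∧ (∀ k, c k ∈ f (s k)) ∧
      ∀ k, ∀ y ∈ uIcc (c k) (c (k + 1)), ∃ x ∈ uIcc (s k) (s (k + 1)), y ∈ f x := by
  have step : ∀ k, ∀ y ∈ f (s k), ∃ y' ∈ f (s (k + 1)),
      ∀ z ∈ uIcc y y', ∃ x ∈ uIcc (s k) (s (k + 1)), z ∈ f x := by
    intro k y hy
    by_cases hk : s k = s (k + 1)
    · refine ⟨y, hk ▸ hy, fun z hz => ⟨s k, left_mem_uIcc, ?_⟩⟩
      rw [uIcc_self, mem_singleton_iff] at hz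
      rwa [hz]
    · exact hf _ (hs k) _ (hs (k + 1)) hk y hy
  choose next hnext hcover using step
  let c : ∀ k, f (s k) := fun k =>
    Nat.rec (motive := fun k => f (s k)) ⟨y₀, hy₀⟩ (fun k y => ⟨next k y y.2, hnext k y y.2⟩) k
  exact ⟨fun k => c k, rfl, fun k => (c k).2, fun k => hcover k (c k) (c k).2⟩

section ClampedGrid

noncomputable def clampedGrid (x₀ d : ℝ) (k : ℕ) : ℝ :=
  projIcc (0 : ℝ) 1 zero_le_one (x₀ + k * d)

variable {x₀ d : ℝ} {k : ℕ}

theorem clampedGrid_mem : clampedGrid x₀ d k ∈ Icc (0 : ℝ) 1 :=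
  Subtype.prop _

theorem clampedGrid_zero (hx₀ : x₀ ∈ Icc (0 : ℝ) 1) : clampedGrid x₀ d 0 = x₀ := by
  simp [clampedGrid, projIcc_of_mem _ hx₀]

theorem abs_clampedGrid_succ_sub : |clampedGrid x₀ d (k + 1) - clampedGrid x₀ d k| ≤ |d| := by
  have := (LipschitzWith.projIcc (zero_le_one' ℝ)).dist_le_mul (x₀ + (k + 1 : ℕ) * d) (x₀ + k * d)
  simpa [clampedGrid, Subtype.dist_eq, Real.dist_eq, add_mul] using this

theorem monotone_clampedGrid (hd : 0 ≤ d) : Monotone (clampedGrid x₀ d) := fun _ _ hab =>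
  Subtype.mono_coe _ (monotone_projIcc _ (by gcongr))

theorem antitone_clampedGrid (hd : d ≤ 0) : Antitone (clampedGrid x₀ d) := fun _ _ hab =>
  Subtype.mono_coe _ (monotone_projIcc _
    (add_le_add_right (mul_le_mul_of_nonpos_right (Nat.cast_le.2 hab) hd) _))

theorem exists_clampedGrid_eq_one (hd : 0 < d) : ∃ N, clampedGrid x₀ d N = 1 := by
  obtain ⟨N, hN⟩ := exists_nat_ge ((1 - x₀) / d)
  refine ⟨N, congrArg Subtype.val (projIcc_of_right_le _ ?_)⟩
  linarith [(div_le_iff₀ hd).1 hN]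

theorem exists_clampedGrid_eq_zero (hd : d < 0) : ∃ N, clampedGrid x₀ d N = 0 := by
  obtain ⟨N, hN⟩ := exists_nat_ge (x₀ / -d)
  refine ⟨N, congrArg Subtype.val (projIcc_of_le_left _ ?_)⟩
  linarith [(div_le_iff₀ (neg_pos.2 hd)).1 hN]

end ClampedGrid

theorem WIVP.exists_staircase {f : ℝ → Set ℝ} (hSV : SV f) (hf : WIVP f) {x₀ y₀ : ℝ}
    (hp : (x₀, y₀) ∈ SVGraph f) (d : ℝ) :
    ∃ c : ℕ → ℝ, (x₀, y₀) ∈ staircase (clampedGrid x₀ d) c ∧ (∀ k, c k ∈ Icc (0 : ℝ) 1) ∧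
      staircase (clampedGrid x₀ d) c ⊆ cthickening |d| (SVGraph f) := by
  obtain ⟨hx₀, hy₀⟩ := hp
  obtain ⟨c, hc0, hcf, hcover⟩ := hf.exists_chain (s := clampedGrid x₀ d)
    (fun _ => clampedGrid_mem) (y₀ := y₀) (by rwa [clampedGrid_zero hx₀])
  refine ⟨c, ?_, fun k => (hSV _ clampedGrid_mem).2.2 (hcf k),
    staircase_subset_cthickening (fun _ => clampedGrid_mem) (fun _ => abs_clampedGrid_succ_sub)
      hcover⟩
  simpa only [clampedGrid_zero hx₀, hc0] using mk_mem_staircase (s := clampedGrid x₀ d) (c := c) 0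

theorem WIVP.exists_approximation {f : ℝ → Set ℝ} (hSV : SV f) (hf : WIVP f) {x₀ y₀ : ℝ}
    (hp : (x₀, y₀) ∈ SVGraph f) {δ : ℝ} (hδ : 0 < δ) :
    ∃ A : Set (ℝ × ℝ), (x₀, y₀) ∈ A ∧ HasIntermediateValues A ∧
      A ⊆ cthickening δ (SVGraph f) ∧ ∀ x ∈ Icc (0 : ℝ) 1, (A ∩ {x} ×ˢ Icc (0 : ℝ) 1).Nonempty := by
  obtain ⟨cL, hp₀L, hcL, hL⟩ := hf.exists_staircase hSV hp (-δ)
  obtain ⟨cR, hp₀R, hcR, hR⟩ := hf.exists_staircase hSV hp δ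
  rw [abs_neg, abs_of_pos hδ] at hL
  rw [abs_of_pos hδ] at hR
  have hanti : Antitone (clampedGrid x₀ (-δ)) := antitone_clampedGrid (by linarith)
  have hmono : Monotone (clampedGrid x₀ δ) := monotone_clampedGrid hδ.le
  have hgrid₀ : ∀ d, clampedGrid x₀ d 0 = x₀ := fun _ => clampedGrid_zero hp.1
  refine ⟨staircase (clampedGrid x₀ (-δ)) cL ∪ staircase (clampedGrid x₀ δ) cR, Or.inr hp₀R,
    ?_, union_subset hL hR, fun x hx => ?_⟩
  · refine (hasIntermediateValues_staircase (Or.inr hanti)).union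
      (hasIntermediateValues_staircase (Or.inl hmono)) hp₀L hp₀R fun p hp q hq => ?_
    exact Icc_subset_uIcc ⟨(hanti.fst_le_of_mem_staircase hp).trans_eq (hgrid₀ _),
      (hgrid₀ _).symm.trans_le (hmono.le_fst_of_mem_staircase hq)⟩
  rcases le_total x x₀ with hxx | hxx
  · obtain ⟨N, hN⟩ := exists_clampedGrid_eq_zero (x₀ := x₀) (neg_lt_zero.2 hδ)
    refine (staircase_inter_nonempty hcL (N := N) ?_).mono
      (inter_subset_inter_left _ subset_union_left)
    rw [hgrid₀, hN]
    exact Icc_subset_uIcc' ⟨hx.1, hxx⟩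
  · obtain ⟨N, hN⟩ := exists_clampedGrid_eq_one (x₀ := x₀) hδ
    refine (staircase_inter_nonempty hcR (N := N) ?_).mono
      (inter_subset_inter_left _ subset_union_right)
    rw [hgrid₀, hN]
    exact Icc_subset_uIcc ⟨hxx, hx.2⟩

theorem stmt14_general (f : ℝ → Set ℝ) (hSV : SV f) (husc : USC f)
    (hwivp : WIVP f)
    (x₀ y₀ : ℝ) (hp : (x₀, y₀) ∈ SVGraph f) :
    ∃ g : ℝ → Set ℝ, USC g ∧
      (∀ x ∈ Icc (0:ℝ) 1,
        (g x).Nonempty ∧ IsCompact (g x) ∧ IsConnected (g x) ∧ g x ⊆ Icc (0:ℝ) 1) ∧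
      (x₀, y₀) ∈ SVGraph g ∧ SVGraph g ⊆ SVGraph f := by
  choose A hp₀A hivA hnearA hsecA using fun n : ℕ =>
    hwivp.exists_approximation hSV hp (Nat.one_div_pos_of_nat (n := n))
  set 𝒰 := Ultrafilter.of (atTop : Filter ℕ)
  set Γ := lowerLimit (𝒰 : Filter ℕ) A
  have hΓf : Γ ⊆ SVGraph f := by
    refine (lowerLimit_subset_closure fun ε hε => ?_).trans
      (isClosed_SVGraph hSV husc).closure_subset
    filter_upwards [Ultrafilter.of_le atTop
      (tendsto_one_div_add_atTop_nhds_zero_nat.eventually (ge_mem_nhds hε))] with n hn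
    exact (hnearA n).trans (cthickening_mono hn _)
  have hΓsq : Γ ⊆ Icc 0 1 ×ˢ Icc 0 1 := fun p hpΓ =>
    ⟨(hΓf hpΓ).1, (hSV _ (hΓf hpΓ).1).2.2 (hΓf hpΓ).2⟩
  refine ⟨fun x => Prod.mk x ⁻¹' Γ,
    usc_preimage_mk isClosed_lowerLimit (isCompact_Icc.prod isCompact_Icc) hΓsq, fun x hx => ?_,
    ⟨hp.1, mem_lowerLimit_of_forall_mem hp₀A⟩, fun q hq => hΓf hq.2⟩
  obtain ⟨⟨x', y⟩, hy, hx' : x' = x, -⟩ :=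
    lowerLimit_inter_nonempty 𝒰 (isCompact_singleton.prod isCompact_Icc) (hsecA · x hx)
  rw [hx'] at hy
  have hsub : Prod.mk x ⁻¹' Γ ⊆ Icc 0 1 := fun _ hy => (hΓsq hy).2
  exact ⟨⟨y, hy⟩, isCompact_Icc.of_isClosed_subset
    (isClosed_lowerLimit.preimage (Continuous.prodMk_right x)) hsub,
    ⟨⟨y, hy⟩, isPreconnected_iff_ordConnected.2 (ordConnected_preimage_mk_lowerLimit hivA x)⟩, hsub⟩

theorem stmt14 (f : ℝ → Set ℝ) (hSV : SV f) (husc : USC f)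
    (hconn : IsConnected (SVGraph f)) (hwivp : WIVP f)
    (x₀ y₀ : ℝ) (hp : (x₀, y₀) ∈ SVGraph f) :
    ∃ g : ℝ → Set ℝ, USC g ∧
      (∀ x ∈ Icc (0:ℝ) 1,
        (g x).Nonempty ∧ IsCompact (g x) ∧ IsConnected (g x) ∧ g x ⊆ Icc (0:ℝ) 1) ∧
      (x₀, y₀) ∈ SVGraph g ∧ SVGraph g ⊆ SVGraph f :=
  stmt14_general f hSV husc hwivp x₀ y₀ hp
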